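/- arXiv:1506.03537 — 4 statements merged into one kernel-verified Lean document; each statement's English description precedes it below -/
import Mathlib

section
/- For two probability densities p and q on a measure space with reference measure ν, and any constant c, the Kullback-Leibler divergence satisfies KL(p‖q) ≤ (1/2)·exp(‖log(p/q) − c‖_∞) · ∫ p (log(p/q) − c)² dν. -/
/-!
Put `u = log (p / q) - c`. Taylor's theorem with Lagrange remainder gives
`exp (-u) - 1 + u ≤ u² / 2 · exp ‖u‖_∞` pointwise. Multiplying by `p` and integrating, the term
`∫ p exp (-u) = exp c ∫ q = exp c` appears, so `KL(p‖q) - c = ∫ p u` is at most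
`1 - exp c + (1/2) exp ‖u‖_∞ ∫ p u²`, and `1 + c ≤ exp c` finishes the proof.
-/

open MeasureTheory Real Set

theorem Real.exp_sub_one_sub_le_sq_div_two_mul_exp_abs (x : ℝ) :
    exp x - 1 - x ≤ x ^ 2 / 2 * exp |x| := by
  rcases eq_or_ne x 0 with rfl | hx
  · simp
  obtain ⟨y, hy, hTaylor⟩ := taylor_mean_remainder_lagrange_iteratedDeriv (n := 1) hx.symm
    contDiff_exp.contDiffOn
  have hpoly : taylorWithinEval exp 1 (uIcc 0 x) 0 x = 1 + x := by
    rw [taylor_within_apply, Finset.sum_range_succ, Finset.sum_range_one, iteratedDerivWithin_one,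
      (hasDerivAt_exp 0).hasDerivWithinAt.derivWithin (uniqueDiffOn_uIcc hx.symm _ left_mem_uIcc)]
    simp
  have hy_le : y ≤ |x| := hy.2.le.trans (max_le (abs_nonneg x) (le_abs_self x))
  rw [hpoly, iteratedDeriv_eq_iterate, iter_deriv_exp] at hTaylor
  calc exp x - 1 - x = exp y * x ^ 2 / 2 := by norm_num at hTaylor; linarith
    _ ≤ x ^ 2 / 2 * exp |x| := by rw [mul_comm (x ^ 2 / 2), mul_div_assoc]; gcongr

theorem Real.exp_neg_add_sub_one_le_of_abs_le {u M : ℝ} (h : |u| ≤ M) :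
    exp (-u) + u - 1 ≤ u ^ 2 / 2 * exp M := by
  have := exp_sub_one_sub_le_sq_div_two_mul_exp_abs (-u)
  rw [neg_sq, abs_neg] at this
  nlinarith [exp_le_exp.2 h, sq_nonneg u]

theorem MeasureTheory.integral_mul_le_of_ae_abs_le {Ω : Type*} [MeasurableSpace Ω]
    {μ : Measure Ω} {p u : Ω → ℝ} {M : ℝ} (hp : 0 ≤ᵐ[μ] p) (hu : ∀ᵐ x ∂μ, |u x| ≤ M)
    (hp_int : Integrable p μ) (hpu : Integrable (fun x => p x * u x) μ)
    (hpexp : Integrable (fun x => p x * exp (-u x)) μ)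
    (hpu2 : Integrable (fun x => p x * u x ^ 2) μ) :
    ∫ x, p x * u x ∂μ ≤
      ∫ x, p x ∂μ - ∫ x, p x * exp (-u x) ∂μ + exp M / 2 * ∫ x, p x * u x ^ 2 ∂μ := by
  have hpointwise : ∀ᵐ x ∂μ,
      p x * u x ≤ p x - p x * exp (-u x) + exp M / 2 * (p x * u x ^ 2) := by
    filter_upwards [hp, hu] with x hpx hux
    nlinarith [mul_le_mul_of_nonneg_left (exp_neg_add_sub_one_le_of_abs_le hux) hpx]
  have hsub : Integrable (fun x => p x - p x * exp (-u x)) μ := hp_int.sub hpexp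
  calc ∫ x, p x * u x ∂μ
      ≤ ∫ x, p x - p x * exp (-u x) + exp M / 2 * (p x * u x ^ 2) ∂μ :=
        integral_mono_ae hpu (hsub.add (hpu2.const_mul _)) hpointwise
    _ = _ := by
      rw [integral_add hsub (hpu2.const_mul _), integral_sub hp_int hpexp, integral_const_mul]

theorem Real.mul_exp_neg_log_div_sub {p q : ℝ} (c : ℝ) (hp : 0 < p) (hq : 0 < q) :
    p * exp (-(log (p / q) - c)) = exp c * q := by
  rw [neg_sub, exp_sub, exp_log (div_pos hp hq)]
  field_simp

theorem stmt0_general {Ω : Type*} [MeasurableSpace Ω] (ν : Measure Ω)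
    (p q : Ω → ℝ) (c : ℝ)
    (hp_pos : ∀ᵐ x ∂ν, 0 < p x) (hq_pos : ∀ᵐ x ∂ν, 0 < q x)
    (hp1 : ∫ x, p x ∂ν = 1) (hq1 : ∫ x, q x ∂ν = 1)
    (hbdd : ∃ M, ∀ᵐ x ∂ν, |Real.log (p x / q x)| ≤ M)
    (hint1 : Integrable (fun x => p x * Real.log (p x / q x)) ν)
    (hint2 : Integrable (fun x => p x * (Real.log (p x / q x) - c) ^ 2) ν) :
    ∫ x, p x * Real.log (p x / q x) ∂ν ≤
      (1 / 2) * Real.exp (essSup (fun x => |Real.log (p x / q x) - c|) ν) *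
        ∫ x, p x * (Real.log (p x / q x) - c) ^ 2 ∂ν := by
  obtain ⟨B, hB⟩ := hbdd
  set u : Ω → ℝ := fun x => log (p x / q x) - c
  have hp_int : Integrable p ν := .of_integral_ne_zero (by simp [hp1])
  have hq_int : Integrable q ν := .of_integral_ne_zero (by simp [hq1])
  have hu_le : ∀ᵐ x ∂ν, |u x| ≤ essSup (fun x => |u x|) ν := by
    refine ae_le_essSup ⟨B + |c|, Filter.eventually_map.2 ?_⟩
    filter_upwards [hB] with x hx
    linarith [abs_sub (log (p x / q x)) c]
  have hpexp : (fun x => p x * exp (-u x)) =ᵐ[ν] fun x => exp c * q x := by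
    filter_upwards [hp_pos, hq_pos] with x hpx hqx
    exact mul_exp_neg_log_div_sub c hpx hqx
  have hpu : ∫ x, p x * u x ∂ν = ∫ x, p x * log (p x / q x) ∂ν - c := by
    simp only [u, mul_sub, integral_sub hint1 (hp_int.mul_const c), integral_mul_const, hp1,
      one_mul]
  have key := integral_mul_le_of_ae_abs_le (hp_pos.mono fun x hx => hx.le) hu_le hp_int
    (by simp only [u, mul_sub]; exact hint1.sub (hp_int.mul_const c))
    ((hq_int.const_mul (exp c)).congr hpexp.symm) hint2
  rw [hpu, hp1, integral_congr_ae hpexp, integral_const_mul, hq1, mul_one] at key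
  linarith [add_one_le_exp c]

/-- KL(p‖q) ≤ (1/2)·exp(‖log(p/q) − c‖_∞) · ∫ p (log(p/q) − c)² dν -/
theorem stmt0 {Ω : Type*} [MeasurableSpace Ω] (ν : Measure Ω) [SigmaFinite ν]
    (p q : Ω → ℝ) (c : ℝ)
    (hpm : Measurable p) (hqm : Measurable q)
    (hp_pos : ∀ᵐ x ∂ν, 0 < p x) (hq_pos : ∀ᵐ x ∂ν, 0 < q x)
    (hp1 : ∫ x, p x ∂ν = 1) (hq1 : ∫ x, q x ∂ν = 1)
    (hbdd : ∃ M, ∀ᵐ x ∂ν, |Real.log (p x / q x)| ≤ M)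
    (hint1 : Integrable (fun x => p x * Real.log (p x / q x)) ν)
    (hint2 : Integrable (fun x => p x * (Real.log (p x / q x) - c) ^ 2) ν) :
    ∫ x, p x * Real.log (p x / q x) ∂ν ≤
      (1 / 2) * Real.exp (essSup (fun x => |Real.log (p x / q x) - c|) ν) *
        ∫ x, p x * (Real.log (p x / q x) - c) ^ 2 ∂ν :=
  stmt0_general ν p q c hp_pos hq_pos hp1 hq1 hbdd hint1 hint2
end

section
/- If p is a probability density and p_θ̃ is the information projection of p onto a finite exponential family with sufficient statistics φ̄ (i.e., E_{p_θ̃}[φ̄] = E_p[φ̄]), then for every member p_θ of that exponential family, KL(p‖p_θ) = KL(p‖p_θ̃) + KL(p_θ̃‖p_θ). -/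
open MeasureTheory
open scoped InnerProductSpace

/-- Pythagorean theorem for KL divergence and information projections onto a
finite-dimensional exponential family. -/
theorem stmt2 {X : Type*} [MeasurableSpace X] (ν : Measure X) {M : ℕ}
    (φ : X → EuclideanSpace ℝ (Fin M)) (Z : EuclideanSpace ℝ (Fin M) → ℝ)
    (p : X → ℝ) (θ θt : EuclideanSpace ℝ (Fin M))
    (pθ : EuclideanSpace ℝ (Fin M) → X → ℝ)
    (hpθ : ∀ η x, pθ η x = Real.exp (⟪η, φ x⟫_ℝ - Z η))
    (hp_pos : ∀ᵐ x ∂ν, 0 < p x)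
    (hp1 : ∫ x, p x ∂ν = 1)
    (hpt_int : Integrable (pθ θt) ν)
    (hpt1 : ∫ x, pθ θt x ∂ν = 1)
    (hmatch : ∫ x, pθ θt x • φ x ∂ν = ∫ x, p x • φ x ∂ν)
    (hintp : Integrable (fun x => p x • φ x) ν)
    (hintpt : Integrable (fun x => pθ θt x • φ x) ν)
    (hkl1 : Integrable (fun x => p x * Real.log (p x / pθ θ x)) ν)
    (hkl2 : Integrable (fun x => p x * Real.log (p x / pθ θt x)) ν)
    (hkl3 : Integrable (fun x => pθ θt x * Real.log (pθ θt x / pθ θ x)) ν) :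
    ∫ x, p x * Real.log (p x / pθ θ x) ∂ν =
      ∫ x, p x * Real.log (p x / pθ θt x) ∂ν +
        ∫ x, pθ θt x * Real.log (pθ θt x / pθ θ x) ∂ν := by
  have hIp : Integrable p ν := by
    by_contra h
    rw [integral_undef h] at hp1
    norm_num at hp1
  set v : EuclideanSpace ℝ (Fin M) := θt - θ with hv
  set c : ℝ := Z θ - Z θt with hc
  -- pointwise: log (pθ θt x / pθ θ x) = ⟪v, φ x⟫ + c
  have hlog : ∀ x, Real.log (pθ θt x / pθ θ x) = ⟪v, φ x⟫_ℝ + c := by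
    intro x
    rw [hpθ, hpθ, ← Real.exp_sub, Real.log_exp, hv, hc, inner_sub_left]
    ring
  have hpθpos : ∀ η x, 0 < pθ η x := by
    intro η x; rw [hpθ]; exact Real.exp_pos _
  -- key a.e. identity
  have hae : ∀ᵐ x ∂ν,
      p x * Real.log (p x / pθ θ x)
        = p x * Real.log (p x / pθ θt x) + p x * (⟪v, φ x⟫_ℝ + c) := by
    filter_upwards [hp_pos] with x hx
    have h1 : Real.log (p x / pθ θ x)
        = Real.log (p x / pθ θt x) + Real.log (pθ θt x / pθ θ x) := by
      rw [Real.log_div hx.ne' (hpθpos θ x).ne',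
        Real.log_div hx.ne' (hpθpos θt x).ne',
        Real.log_div (hpθpos θt x).ne' (hpθpos θ x).ne']
      ring
    rw [h1, hlog]; ring
  -- integrability of the linear correction terms
  have hintq : Integrable (fun x => p x * (⟪v, φ x⟫_ℝ + c)) ν := by
    have h1 : Integrable (fun x => ⟪v, p x • φ x⟫_ℝ) ν := hintp.const_inner v
    have h2 : Integrable (fun x => p x * c) ν := hIp.mul_const c
    have := h1.add h2
    refine this.congr (Filter.Eventually.of_forall fun x => ?_)
    show ⟪v, p x • φ x⟫_ℝ + p x * c = p x * (⟪v, φ x⟫_ℝ + c)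
    rw [real_inner_smul_right]; ring
  have hintq' : Integrable (fun x => pθ θt x * (⟪v, φ x⟫_ℝ + c)) ν := by
    have h1 : Integrable (fun x => ⟪v, pθ θt x • φ x⟫_ℝ) ν := hintpt.const_inner v
    have h2 : Integrable (fun x => pθ θt x * c) ν := hpt_int.mul_const c
    have := h1.add h2
    refine this.congr (Filter.Eventually.of_forall fun x => ?_)
    show ⟪v, pθ θt x • φ x⟫_ℝ + pθ θt x * c = pθ θt x * (⟪v, φ x⟫_ℝ + c)
    rw [real_inner_smul_right]; ring
  -- the correction integrals agree
  have hcorr : ∫ x, p x * (⟪v, φ x⟫_ℝ + c) ∂ν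
      = ∫ x, pθ θt x * (⟪v, φ x⟫_ℝ + c) ∂ν := by
    have e1 : ∀ (f : X → ℝ), (∀ x, f x * (⟪v, φ x⟫_ℝ + c) = ⟪v, f x • φ x⟫_ℝ + f x * c) := by
      intro f x; rw [real_inner_smul_right]; ring
    calc ∫ x, p x * (⟪v, φ x⟫_ℝ + c) ∂ν
        = ∫ x, (⟪v, p x • φ x⟫_ℝ + p x * c) ∂ν := by
          exact integral_congr_ae (Filter.Eventually.of_forall fun x => e1 p x)
      _ = ⟪v, ∫ x, p x • φ x ∂ν⟫_ℝ + (∫ x, p x ∂ν) * c := by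
          rw [integral_add (hintp.const_inner v) (hIp.mul_const c),
            integral_inner hintp, integral_mul_const]
      _ = ⟪v, ∫ x, pθ θt x • φ x ∂ν⟫_ℝ + (∫ x, pθ θt x ∂ν) * c := by
          rw [hmatch, hp1, hpt1]
      _ = ∫ x, (⟪v, pθ θt x • φ x⟫_ℝ + pθ θt x * c) ∂ν := by
          rw [integral_add (hintpt.const_inner v) (hpt_int.mul_const c),
            integral_inner hintpt, integral_mul_const]
      _ = ∫ x, pθ θt x * (⟪v, φ x⟫_ℝ + c) ∂ν := by
          exact (integral_congr_ae (Filter.Eventually.of_forall fun x => e1 (pθ θt) x)).symm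
  have hfin : ∫ x, pθ θt x * (⟪v, φ x⟫_ℝ + c) ∂ν
      = ∫ x, pθ θt x * Real.log (pθ θt x / pθ θ x) ∂ν := by
    refine integral_congr_ae (Filter.Eventually.of_forall fun x => ?_)
    show pθ θt x * (⟪v, φ x⟫_ℝ + c) = pθ θt x * Real.log (pθ θt x / pθ θ x)
    rw [hlog x]
  calc ∫ x, p x * Real.log (p x / pθ θ x) ∂ν
      = ∫ x, (p x * Real.log (p x / pθ θt x) + p x * (⟪v, φ x⟫_ℝ + c)) ∂ν :=
        integral_congr_ae hae
    _ = ∫ x, p x * Real.log (p x / pθ θt x) ∂ν + ∫ x, p x * (⟪v, φ x⟫_ℝ + c) ∂ν :=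
        integral_add hkl2 hintq
    _ = ∫ x, p x * Real.log (p x / pθ θt x) ∂ν +
          ∫ x, pθ θt x * Real.log (pθ θt x / pθ θ x) ∂ν := by
        rw [hcorr, hfin]
end

section
/- Let φ_k denote the k-th orthonormal shifted Legendre polynomial on [0,1]. Then |x(1−x) φ_k'(x)| = O(k^{3/2}) and |x(1−x) φ_k''(x)| = O(k^{5/2}) uniformly over x ∈ [0,1]. -/
/-- The `k`-th Legendre polynomial on [−1,1] (Rodrigues' formula). -/
noncomputable def legendreP (k : ℕ) : Polynomial ℝ :=
  ((1 : ℝ) / (2 ^ k * (k.factorial : ℝ))) •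
    (Polynomial.derivative^[k] ((Polynomial.X ^ 2 - 1) ^ k))

/-- The `k`-th orthonormal shifted Legendre polynomial on [0,1]. -/
noncomputable def shiftedLegendre (k : ℕ) : ℝ → ℝ :=
  fun x => Real.sqrt (2 * k + 1) * (legendreP k).eval (2 * x - 1)

/-!
Write `P = legendreP k` and `m = k (k + 1)` on `[-1, 1]`. Rodrigues' formula gives Legendre's
equation `(1 - y²) P'' - 2 y P' + m P = 0` and `P(±1) = (±1)^k`. By the equation and its derivative,
the functions `m P² + (1 - y²) P'²` and `(m - 2) P'² + (1 - y²) P''²` have derivatives `2 y P'²` and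
`6 y P''²`, so they are largest at `y = ±1` (Sonin's argument). Hence `(1 - y²) P'² ≤ m`, `m P² ≤ m`
and `|P'| ≤ m / 2`, and the equation then bounds `(1 - y²) P''` by `2 m`. Under `y = 2x - 1` we have
`x (1 - x) = (1 - y²) / 4`, and the normalising factor `√(2k + 1)` turns the bounds `√m` and `2 m`
into `O(k^{3/2})` and `O(k^{5/2})`.
-/

open Polynomial Set

theorem le_of_forall_mul_deriv_nonneg {f : ℝ → ℝ} (hf : Differentiable ℝ f)
    (hf' : ∀ t, 0 ≤ t * deriv f t) {a b M y : ℝ} (ha : f a ≤ M) (hb : f b ≤ M)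
    (hy : y ∈ Icc a b) : f y ≤ M := by
  rcases le_or_gt 0 y with hy0 | hy0
  · have hmono : MonotoneOn f (Icc 0 b) :=
      monotoneOn_of_deriv_nonneg (convex_Icc 0 b) hf.continuous.continuousOn
        hf.differentiableOn fun t ht ↦
          nonneg_of_mul_nonneg_right (hf' t) (by rw [interior_Icc] at ht; exact ht.1)
    exact (hmono ⟨hy0, hy.2⟩ ⟨hy0.trans hy.2, le_rfl⟩ hy.2).trans hb
  · have hanti : AntitoneOn f (Icc a 0) :=
      antitoneOn_of_deriv_nonpos (convex_Icc a 0) hf.continuous.continuousOn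
        hf.differentiableOn fun t ht ↦
          nonpos_of_mul_nonneg_right (hf' t) (by rw [interior_Icc] at ht; exact ht.2)
    exact (hanti ⟨le_rfl, hy.1.trans hy0.le⟩ ⟨hy.1, hy0.le⟩ hy.1).trans ha

theorem Polynomial.eval_le_of_forall_mul_eval_derivative_nonneg {F : ℝ[X]}
    (hF : ∀ t, 0 ≤ t * (derivative F).eval t) {a b M y : ℝ} (ha : F.eval a ≤ M)
    (hb : F.eval b ≤ M) (hy : y ∈ Icc a b) : F.eval y ≤ M :=
  le_of_forall_mul_deriv_nonneg (f := fun t ↦ F.eval t) F.differentiable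
    (fun t ↦ by simpa only [Polynomial.deriv] using hF t) ha hb hy

section IterateDerivative

variable {R : Type*} [CommRing R]

theorem eval_iterate_derivative_X_sub_C_pow_mul (a : R) (k : ℕ) (q : R[X]) :
    (derivative^[k] ((X - C a) ^ k * q)).eval a = k.factorial * q.eval a := by
  rw [iterate_derivative_mul, eval_finsetSum,
    Finset.sum_eq_single_of_mem 0 (Finset.mem_range.2 k.succ_pos)]
  · simp [iterate_derivative_X_sub_pow_self]
  · intro j hj hj0
    have hjk : j ≤ k := Nat.lt_succ_iff.mp (Finset.mem_range.1 hj)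
    simp [iterate_derivative_X_sub_pow, Nat.sub_sub_self hjk, zero_pow hj0]

theorem X_sq_sub_one_mul_derivative_X_sq_sub_one_pow (k : ℕ) :
    ((X : R[X]) ^ 2 - 1) * derivative ((X ^ 2 - 1) ^ k) = 2 * (k : R[X]) * X * (X ^ 2 - 1) ^ k := by
  cases k with
  | zero => simp
  | succ n =>
    rw [derivative_pow]
    simp only [derivative_sub, derivative_one, derivative_X_pow, Nat.add_sub_cancel, C_eq_natCast]
    push_cast
    ring

theorem iterate_derivative_X_sq_sub_one_pow_ode (k : ℕ) :
    ((X : R[X]) ^ 2 - 1) * derivative^[k + 2] ((X ^ 2 - 1) ^ k)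
      + 2 * X * derivative^[k + 1] ((X ^ 2 - 1) ^ k)
      = (k * (k + 1) : R[X]) * derivative^[k] ((X ^ 2 - 1) ^ k) := by
  set w : R[X] := (X ^ 2 - 1) ^ k
  -- one derivative of `(X² - 1) w' = 2 k X w`, in the shape of the Leibniz rules used below
  have hw : derivative^[2] w * X ^ 2 - derivative^[2] w + (2 - 2 * k : R) • (derivative w * X)
      - (2 * k : R) • w = 0 := by
    have h := congrArg derivative (X_sq_sub_one_mul_derivative_X_sq_sub_one_pow (R := R) k)
    simp only [derivative_mul, derivative_sub, derivative_X_pow, derivative_one,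
      derivative_ofNat, derivative_natCast, derivative_X, Nat.cast_ofNat, map_ofNat] at h
    simp only [Function.iterate_succ, Function.iterate_zero, Function.comp_apply, id,
      smul_eq_C_mul, map_sub, map_mul, map_ofNat, map_natCast]
    linear_combination h
  have h := congrArg (derivative ^ k : Module.End R R[X]) hw
  simp only [map_add, map_sub, map_smul, map_zero, Module.End.pow_apply,
    iterate_derivative_derivative_mul_X_sq, iterate_derivative_derivative_mul_X,
    ← Function.iterate_add_apply] at h
  have hk : ((k * (k - 1) : ℕ) : R[X]) = k * (k - 1) := by cases k <;> simp
  simp only [nsmul_eq_mul, smul_eq_C_mul, hk, map_sub, map_mul, map_ofNat, map_natCast] at h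
  push_cast at h
  linear_combination h

end IterateDerivative

namespace legendreP

variable (k : ℕ) {y : ℝ}

theorem eval_one : (legendreP k).eval 1 = 1 := by
  have h : ((X : ℝ[X]) ^ 2 - 1) ^ k = (X - C 1) ^ k * (X - C (-1)) ^ k := by
    rw [← mul_pow]; simp only [map_neg, C_1]; ring
  rw [legendreP, eval_smul, h, eval_iterate_derivative_X_sub_C_pow_mul]
  simp only [eval_pow, eval_sub, eval_X, eval_C, smul_eq_mul]
  field_simp
  norm_num

theorem eval_neg_one : (legendreP k).eval (-1) = (-1) ^ k := by
  have h : ((X : ℝ[X]) ^ 2 - 1) ^ k = (X - C (-1)) ^ k * (X - C 1) ^ k := by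
    rw [← mul_pow]; simp only [map_neg, C_1]; ring
  rw [legendreP, eval_smul, h, eval_iterate_derivative_X_sub_C_pow_mul]
  simp only [eval_pow, eval_sub, eval_X, eval_C, smul_eq_mul]
  rw [show (-1 - 1 : ℝ) = -1 * 2 by norm_num, mul_pow]
  field_simp

theorem natDegree_le : (legendreP k).natDegree ≤ k := by
  refine (natDegree_smul_le _ _).trans ((natDegree_iterate_derivative _ _).trans ?_)
  have h2 : ((X : ℝ[X]) ^ 2 - 1).natDegree = 2 := by
    rw [natDegree_sub_eq_left_of_natDegree_lt] <;> simp
  have hpow := natDegree_pow_le (p := (X : ℝ[X]) ^ 2 - 1) (n := k)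
  rw [h2] at hpow
  omega

theorem ode :
    ((X : ℝ[X]) ^ 2 - 1) * derivative (derivative (legendreP k))
      + 2 * X * derivative (legendreP k) = (k * (k + 1) : ℝ[X]) * legendreP k := by
  simp only [legendreP, derivative_smul, ← Function.iterate_succ_apply' derivative, mul_smul_comm,
    ← smul_add, iterate_derivative_X_sq_sub_one_pow_ode]

theorem derivative_eval_one :
    (derivative (legendreP k)).eval 1 = k * (k + 1) / 2 := by
  have h := congrArg (eval 1) (ode k)
  simp only [eval_add, eval_mul, eval_sub, eval_pow, eval_X, Polynomial.eval_one, eval_ofNat,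
    eval_natCast, legendreP.eval_one] at h
  linarith

theorem derivative_eval_neg_one :
    (derivative (legendreP k)).eval (-1) = (-1) ^ (k + 1) * (k * (k + 1) / 2) := by
  have h := congrArg (eval (-1)) (ode k)
  simp only [eval_add, eval_mul, eval_sub, eval_pow, eval_X, Polynomial.eval_one, eval_ofNat,
    eval_natCast, legendreP.eval_neg_one] at h
  rw [pow_succ]
  linarith

theorem energy_le (hy : y ∈ Icc (-1 : ℝ) 1) :
    k * (k + 1) * (legendreP k).eval y ^ 2 + (1 - y ^ 2) * (derivative (legendreP k)).eval y ^ 2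
      ≤ k * (k + 1) := by
  set P := legendreP k with hP
  set F : ℝ[X] := (k * (k + 1) : ℝ[X]) * P ^ 2 + (1 - X ^ 2) * derivative P ^ 2
  have hF : derivative F = 2 * X * derivative P ^ 2 := by
    simp only [F, derivative_add, derivative_mul, derivative_sub, derivative_one, derivative_sq,
      derivative_X, derivative_natCast, map_ofNat]
    linear_combination (-2 * derivative P) * ode k
  have hFeval : ∀ t, F.eval t
      = k * (k + 1) * P.eval t ^ 2 + (1 - t ^ 2) * (derivative P).eval t ^ 2 := by
    intro t; simp [F]
  rw [← hFeval]
  refine Polynomial.eval_le_of_forall_mul_eval_derivative_nonneg (fun t ↦ ?_) ?_ ?_ hy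
  · have : t * (derivative F).eval t = 2 * (t * (derivative P).eval t) ^ 2 := by
      simp only [hF, eval_mul, eval_pow, eval_X, eval_ofNat]; ring
    rw [this]; positivity
  · rw [hFeval, hP, eval_neg_one, ← pow_mul, mul_comm k, pow_mul]; norm_num
  · rw [hFeval, hP, eval_one]; norm_num

theorem sq_derivative_eval_le (hy : y ∈ Icc (-1 : ℝ) 1) :
    (derivative (legendreP k)).eval y ^ 2 ≤ (k * (k + 1) / 2) ^ 2 := by
  set P := legendreP k with hP
  rcases lt_or_ge k 2 with hk | hk
  -- for `k ≤ 1` the energy below is useless (`m ≤ 2`), but then `P'` is constant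
  · have hP'' : derivative (derivative P) = 0 :=
      iterate_derivative_eq_zero ((natDegree_le k).trans_lt hk)
    have hconst : (derivative P).eval y = (derivative P).eval 1 := by
      rw [eq_C_of_derivative_eq_zero hP'']; simp only [eval_C]
    rw [hconst, hP, derivative_eval_one]
  set m : ℝ := k * (k + 1)
  have hm : 2 < m := by
    have : (2 : ℝ) ≤ k := by exact_mod_cast hk
    nlinarith
  set G : ℝ[X] :=
    (k * (k + 1) - 2 : ℝ[X]) * derivative P ^ 2 + (1 - X ^ 2) * derivative (derivative P) ^ 2
  have hG : derivative G = 6 * X * derivative (derivative P) ^ 2 := by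
    have h := congrArg derivative (ode k)
    simp only [derivative_add, derivative_mul, derivative_sub, derivative_one, derivative_sq,
      derivative_X, derivative_natCast, map_ofNat, derivative_ofNat] at h
    simp only [G, derivative_add, derivative_mul, derivative_sub, derivative_one, derivative_sq,
      derivative_X, derivative_natCast, derivative_ofNat, map_ofNat]
    linear_combination (-2 * derivative (derivative P)) * h
  have hGeval : ∀ t, G.eval t = (m - 2) * (derivative P).eval t ^ 2
      + (1 - t ^ 2) * (derivative (derivative P)).eval t ^ 2 := by
    intro t; simp [G, m]
  have hGy : G.eval y ≤ (m - 2) * (m / 2) ^ 2 := by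
    refine Polynomial.eval_le_of_forall_mul_eval_derivative_nonneg (fun t ↦ ?_) ?_ ?_ hy
    · have : t * (derivative G).eval t = 6 * (t * (derivative (derivative P)).eval t) ^ 2 := by
        simp only [hG, eval_mul, eval_pow, eval_X, eval_ofNat]; ring
      rw [this]; positivity
    · rw [hGeval, hP, derivative_eval_neg_one, mul_pow, ← pow_mul, mul_comm (k + 1), pow_mul]
      norm_num [m]
    · rw [hGeval, hP, derivative_eval_one]; norm_num [m]
  rw [hGeval] at hGy
  have h1y : 0 ≤ 1 - y ^ 2 := by nlinarith [hy.1, hy.2]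
  refine le_of_mul_le_mul_left ?_ (sub_pos.2 hm)
  nlinarith [mul_nonneg h1y (sq_nonneg ((derivative (derivative P)).eval y))]

theorem abs_one_sub_sq_mul_derivative_eval_le (hy : y ∈ Icc (-1 : ℝ) 1) :
    |(1 - y ^ 2) * (derivative (legendreP k)).eval y| ≤ √((k : ℝ) * (k + 1)) := by
  have h1y : 0 ≤ 1 - y ^ 2 := by nlinarith [hy.1, hy.2]
  have hy2 : 1 - y ^ 2 ≤ 1 := by nlinarith
  refine Real.abs_le_sqrt ?_
  have hE := energy_le k hy
  have hP2 := sq_nonneg ((legendreP k).eval y)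
  calc ((1 - y ^ 2) * (derivative (legendreP k)).eval y) ^ 2
      ≤ (1 - y ^ 2) * (derivative (legendreP k)).eval y ^ 2 := by
        rw [mul_pow, sq (1 - y ^ 2), mul_assoc]
        exact mul_le_of_le_one_left (by positivity) hy2
    _ ≤ (k : ℝ) * (k + 1) := by
        nlinarith [mul_nonneg (by positivity : (0 : ℝ) ≤ k * (k + 1)) hP2]

theorem abs_one_sub_sq_mul_derivative_derivative_eval_le (hy : y ∈ Icc (-1 : ℝ) 1) :
    |(1 - y ^ 2) * (derivative (derivative (legendreP k))).eval y|
      ≤ 2 * ((k : ℝ) * (k + 1)) := by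
  set m : ℝ := k * (k + 1)
  have hm : 0 ≤ m := by positivity
  have hode : (1 - y ^ 2) * (derivative (derivative (legendreP k))).eval y
      = 2 * (y * (derivative (legendreP k)).eval y) - m * (legendreP k).eval y := by
    have h := congrArg (eval y) (ode k)
    simp only [eval_add, eval_mul, eval_sub, eval_pow, eval_X, Polynomial.eval_one, eval_ofNat,
      eval_natCast] at h
    linear_combination -h
  have hyP' : |y * (derivative (legendreP k)).eval y| ≤ m / 2 := by
    rw [abs_mul]
    exact (mul_le_of_le_one_left (abs_nonneg _) (abs_le.2 ⟨hy.1, hy.2⟩)).trans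
      (abs_le_of_sq_le_sq (sq_derivative_eval_le k hy) (by positivity))
  have hmP : |m * (legendreP k).eval y| ≤ m := by
    have hE := energy_le k hy
    have h1y : 0 ≤ (1 - y ^ 2) * (derivative (legendreP k)).eval y ^ 2 := by
      have : 0 ≤ 1 - y ^ 2 := by nlinarith [hy.1, hy.2]
      positivity
    refine abs_le_of_sq_le_sq ?_ hm
    nlinarith [mul_le_mul_of_nonneg_left (show m * (legendreP k).eval y ^ 2 ≤ m by linarith) hm]
  rw [hode]
  calc |2 * (y * (derivative (legendreP k)).eval y) - m * (legendreP k).eval y|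
      ≤ |2 * (y * (derivative (legendreP k)).eval y)| + |m * (legendreP k).eval y| :=
        abs_sub _ _
    _ ≤ 2 * m := by rw [abs_mul, abs_two]; linarith

end legendreP

theorem deriv_const_mul_eval_two_mul_sub_one (c : ℝ) (p : ℝ[X]) :
    deriv (fun x ↦ c * p.eval (2 * x - 1))
      = fun x ↦ 2 * c * (derivative p).eval (2 * x - 1) := by
  funext x
  have hlin : HasDerivAt (fun x : ℝ ↦ 2 * x - 1) 2 x := by
    simpa using ((hasDerivAt_id x).const_mul (2 : ℝ)).sub_const 1
  have hcomp := (p.hasDerivAt (2 * x - 1)).comp x hlin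
  exact (hcomp.const_mul c).deriv.trans (by ring)

namespace shiftedLegendre

theorem deriv_eq (k : ℕ) : deriv (shiftedLegendre k)
    = fun x ↦ 2 * √(2 * k + 1) * (derivative (legendreP k)).eval (2 * x - 1) :=
  deriv_const_mul_eval_two_mul_sub_one _ _

theorem deriv_deriv_eq (k : ℕ) : deriv (deriv (shiftedLegendre k))
    = fun x ↦ 4 * √(2 * k + 1) * (derivative (derivative (legendreP k))).eval (2 * x - 1) := by
  rw [deriv_eq, deriv_const_mul_eval_two_mul_sub_one]
  ring_nf

theorem abs_mul_deriv_le (k : ℕ) {x : ℝ} (hx : x ∈ Icc (0 : ℝ) 1) :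
    |x * (1 - x) * deriv (shiftedLegendre k) x| ≤ √(2 * k + 1) / 2 * √((k : ℝ) * (k + 1)) := by
  have hy : 2 * x - 1 ∈ Icc (-1 : ℝ) 1 := ⟨by linarith [hx.1], by linarith [hx.2]⟩
  have h : x * (1 - x) * deriv (shiftedLegendre k) x = √(2 * k + 1) / 2
      * ((1 - (2 * x - 1) ^ 2) * (derivative (legendreP k)).eval (2 * x - 1)) := by
    rw [deriv_eq]; ring
  rw [h, abs_mul, abs_of_nonneg (by positivity)]
  gcongr
  exact legendreP.abs_one_sub_sq_mul_derivative_eval_le k hy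

theorem abs_mul_deriv_deriv_le (k : ℕ) {x : ℝ} (hx : x ∈ Icc (0 : ℝ) 1) :
    |x * (1 - x) * deriv (deriv (shiftedLegendre k)) x|
      ≤ √(2 * k + 1) * (2 * ((k : ℝ) * (k + 1))) := by
  have hy : 2 * x - 1 ∈ Icc (-1 : ℝ) 1 := ⟨by linarith [hx.1], by linarith [hx.2]⟩
  have h : x * (1 - x) * deriv (deriv (shiftedLegendre k)) x = √(2 * k + 1)
      * ((1 - (2 * x - 1) ^ 2) * (derivative (derivative (legendreP k))).eval (2 * x - 1)) := by
    rw [deriv_deriv_eq]; ring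
  rw [h, abs_mul, abs_of_nonneg (by positivity)]
  gcongr
  exact legendreP.abs_one_sub_sq_mul_derivative_derivative_eval_le k hy

end shiftedLegendre

theorem le_mul_natCast_rpow_div_two {a c : ℝ} {k n : ℕ} (h : a ^ 2 ≤ c ^ 2 * k ^ n)
    (hc : 0 ≤ c) : a ≤ c * (k : ℝ) ^ ((n : ℝ) / 2) := by
  rw [Real.rpow_div_two_eq_sqrt _ k.cast_nonneg, Real.rpow_natCast]
  refine le_of_sq_le_sq ?_ (by positivity)
  rwa [mul_pow, ← pow_mul, mul_comm n, pow_mul, Real.sq_sqrt k.cast_nonneg]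

theorem sqrt_two_mul_add_one_div_two_mul_sqrt_le (k : ℕ) :
    √(2 * k + 1) / 2 * √((k : ℝ) * (k + 1)) ≤ 7 * (k : ℝ) ^ ((3 : ℝ) / 2) := by
  have hsq : (√(2 * k + 1) / 2 * √((k : ℝ) * (k + 1))) ^ 2 ≤ 7 ^ 2 * (k : ℝ) ^ 3 := by
    rw [mul_pow, div_pow, Real.sq_sqrt (by positivity), Real.sq_sqrt (by positivity)]
    rcases k.eq_zero_or_pos with rfl | hk
    · simp
    · have hk1 : (1 : ℝ) ≤ k := by exact_mod_cast hk
      have hk2 : (k : ℝ) ≤ k ^ 2 := by nlinarith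
      have hk3 : (k : ℝ) ^ 2 ≤ k ^ 3 := by nlinarith
      nlinarith
  have h := le_mul_natCast_rpow_div_two hsq (by norm_num)
  rwa [Nat.cast_ofNat] at h

theorem sqrt_two_mul_add_one_mul_le (k : ℕ) :
    √(2 * k + 1) * (2 * ((k : ℝ) * (k + 1))) ≤ 7 * (k : ℝ) ^ ((5 : ℝ) / 2) := by
  have hsq : (√(2 * k + 1) * (2 * ((k : ℝ) * (k + 1)))) ^ 2 ≤ 7 ^ 2 * (k : ℝ) ^ 5 := by
    rw [mul_pow, Real.sq_sqrt (by positivity)]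
    rcases k.eq_zero_or_pos with rfl | hk
    · simp
    · have hk1 : (1 : ℝ) ≤ k := by exact_mod_cast hk
      have h1 : (2 * k + 1 : ℝ) ≤ 3 * k := by linarith
      have h2 : (2 * ((k : ℝ) * (k + 1))) ^ 2 ≤ 16 * k ^ 4 := by
        have : (k : ℝ) + 1 ≤ 2 * k := by linarith
        rw [show (2 * ((k : ℝ) * (k + 1))) ^ 2 = 4 * k ^ 2 * (k + 1) ^ 2 by ring]
        nlinarith [pow_le_pow_left₀ (by positivity) this 2]
      nlinarith [mul_le_mul h1 h2 (by positivity) (by positivity)]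
  have h := le_mul_natCast_rpow_div_two hsq (by norm_num)
  rwa [Nat.cast_ofNat] at h

/-- |x(1−x)φ_k'(x)| = O(k^{3/2}) and |x(1−x)φ_k''(x)| = O(k^{5/2}) uniformly on [0,1]. -/
theorem stmt16 :
    ∃ C > (0 : ℝ), ∀ k : ℕ, ∀ x ∈ Set.Icc (0 : ℝ) 1,
      |x * (1 - x) * deriv (shiftedLegendre k) x| ≤ C * (k : ℝ) ^ ((3 : ℝ) / 2) ∧
      |x * (1 - x) * deriv (deriv (shiftedLegendre k)) x| ≤ C * (k : ℝ) ^ ((5 : ℝ) / 2) := by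
  refine ⟨7, by norm_num, fun k x hx ↦ ⟨?_, ?_⟩⟩
  · exact (shiftedLegendre.abs_mul_deriv_le k hx).trans
      (sqrt_two_mul_add_one_div_two_mul_sqrt_le k)
  · exact (shiftedLegendre.abs_mul_deriv_deriv_le k hx).trans (sqrt_two_mul_add_one_mul_le k)
end

section
/- For the regularized score matching objective E(δ) = ½ δ^⊤ Γ̂ δ + δ^⊤ v + λ(R(θ* + δ) − R(θ*)), where Γ̂ satisfies δ^⊤ Γ̂ δ ≥ (ε/2)‖δ‖² for all δ, R is a norm decomposable with respect to a subspace P̃ with compatibility constant √s (so R(u) ≤ √s ‖u‖ on P̃), θ* ∈ P̃, and λ ≥ 2R*(v), any δ̂ with E(δ̂) ≤ 0 satisfies ‖δ̂‖₂ ≤ (7λ/ε)√s. -/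
/-!
Write `δ = a + b` with `a` the orthogonal projection of `δ` onto `P` and `b ∈ Pᗮ`. Decomposability
of `N` at `θ* + a ∈ P` gives `N (θ* + δ) - N θ* ≥ N b - N a`, while the dual-norm bound and
`λ ≥ 2 R*` give `⟪δ, v⟫ ≥ -(λ/2) (N a + N b)`. Hence `E(δ) ≤ 0` forces
`½ ⟪δ, Γ δ⟫ ≤ (3λ/2) N a ≤ (3λ/2) √s ‖δ‖`, and restricted strong convexity turns this into
`‖δ‖ ≤ 6 λ √s / ε`.
-/

open scoped InnerProductSpace

variable {E : Type*} [NormedAddCommGroup E] [InnerProductSpace ℝ E]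

def Seminorm.IsDecomposable (N : Seminorm ℝ E) (K : Submodule ℝ E) : Prop :=
  ∀ a ∈ K, ∀ b ∈ Kᗮ, N (a + b) = N a + N b

namespace Seminorm.IsDecomposable

variable {N : Seminorm ℝ E} {K : Submodule ℝ E} [K.HasOrthogonalProjection]

theorem map_eq_add (hN : N.IsDecomposable K) (δ : E) :
    N δ = N (K.starProjection δ) + N (δ - K.starProjection δ) := by
  rw [← hN _ (K.starProjection_apply_mem δ) _ (K.sub_starProjection_mem_orthogonal δ),
    add_sub_cancel]

theorem sub_le_map_add_sub (hN : N.IsDecomposable K) {θ : E} (hθ : θ ∈ K) (δ : E) :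
    N (δ - K.starProjection δ) - N (K.starProjection δ) ≤ N (θ + δ) - N θ := by
  set a := K.starProjection δ
  have hsplit : N (θ + δ) = N (θ + a) + N (δ - a) := by
    rw [← hN _ (K.add_mem hθ (K.starProjection_apply_mem δ)) _
      (K.sub_starProjection_mem_orthogonal δ)]
    congr 1
    abel
  have htriangle : N θ ≤ N (θ + a) + N a := by
    simpa using map_add_le_add N (θ + a) (-a)
  linarith

theorem sub_le_inner_add_mul_sub (hN : N.IsDecomposable K) {θ v : E} (hθ : θ ∈ K)
    {lam Rstar : ℝ} (hdual : ∀ δ, |⟪δ, v⟫_ℝ| ≤ N δ * Rstar) (hlam : 2 * Rstar ≤ lam)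
    (hlam0 : 0 ≤ lam) (δ : E) :
    lam / 2 * N (δ - K.starProjection δ) - 3 * lam / 2 * N (K.starProjection δ) ≤
      ⟪δ, v⟫_ℝ + lam * (N (θ + δ) - N θ) := by
  have hinner : -(lam / 2 * N δ) ≤ ⟪δ, v⟫_ℝ := by
    have hRstar : N δ * Rstar ≤ lam / 2 * N δ := by
      nlinarith [apply_nonneg N δ]
    linarith [neg_abs_le ⟪δ, v⟫_ℝ, hdual δ]
  have hpenalty := mul_le_mul_of_nonneg_left (hN.sub_le_map_add_sub hθ δ) hlam0
  rw [hN.map_eq_add δ] at hinner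
  linarith

end Seminorm.IsDecomposable

theorem le_div_of_mul_sq_le_mul {x a b : ℝ} (hx : 0 ≤ x) (ha : 0 < a) (hb : 0 ≤ b)
    (h : a * x ^ 2 ≤ b * x) : x ≤ b / a := by
  rcases hx.eq_or_lt with rfl | hx
  · exact div_nonneg hb ha.le
  · rw [le_div_iff₀ ha]
    nlinarith

theorem stmt18_general {p : ℕ}
    (Γ : EuclideanSpace ℝ (Fin p) →ₗ[ℝ] EuclideanSpace ℝ (Fin p))
    (v θstar : EuclideanSpace ℝ (Fin p))
    (N : Seminorm ℝ (EuclideanSpace ℝ (Fin p)))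
    (P : Submodule ℝ (EuclideanSpace ℝ (Fin p)))
    (ε s lam Rstar : ℝ) (hε : 0 < ε) (hRstar : 0 ≤ Rstar)
    (hΓ : ∀ δ, ε / 2 * ‖δ‖ ^ 2 ≤ ⟪δ, Γ δ⟫_ℝ)
    (hdual : ∀ δ, |⟪δ, v⟫_ℝ| ≤ N δ * Rstar)
    (hdecomp : ∀ a ∈ P, ∀ b ∈ Pᗮ, N (a + b) = N a + N b)
    (hcompat : ∀ u ∈ P, N u ≤ Real.sqrt s * ‖u‖)
    (hθstar : θstar ∈ P)
    (hlam : 2 * Rstar ≤ lam)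
    (δhat : EuclideanSpace ℝ (Fin p))
    (hE : (1 / 2) * ⟪δhat, Γ δhat⟫_ℝ + ⟪δhat, v⟫_ℝ +
        lam * (N (θstar + δhat) - N θstar) ≤ 0) :
    ‖δhat‖ ≤ 7 * lam / ε * Real.sqrt s := by
  have hlam0 : 0 ≤ lam := by linarith
  have hlower :=
    Seminorm.IsDecomposable.sub_le_inner_add_mul_sub (K := P) hdecomp hθstar hdual hlam hlam0 δhat
  have hcompat_proj : N (P.starProjection δhat) ≤ Real.sqrt s * ‖δhat‖ :=
    (hcompat _ (P.starProjection_apply_mem δhat)).trans <|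
      mul_le_mul_of_nonneg_left (P.norm_starProjection_apply_le δhat) (Real.sqrt_nonneg s)
  have hquad : ε / 4 * ‖δhat‖ ^ 2 ≤ 3 * lam / 2 * Real.sqrt s * ‖δhat‖ := by
    nlinarith [hΓ δhat, apply_nonneg N (δhat - P.starProjection δhat),
      mul_le_mul_of_nonneg_left hcompat_proj hlam0]
  calc ‖δhat‖ ≤ 3 * lam / 2 * Real.sqrt s / (ε / 4) :=
        le_div_of_mul_sq_le_mul (norm_nonneg _) (by positivity) (by positivity) hquad
    _ = 6 * lam / ε * Real.sqrt s := by field_simp; ring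
    _ ≤ 7 * lam / ε * Real.sqrt s := by gcongr; linarith

/-- Estimation-error bound for regularized score matching: under restricted strong
convexity, decomposability and compatibility, any δ̂ with E(δ̂) ≤ 0 satisfies
‖δ̂‖ ≤ (7λ/ε)√s. -/
theorem stmt18 {p : ℕ}
    (Γ : EuclideanSpace ℝ (Fin p) →ₗ[ℝ] EuclideanSpace ℝ (Fin p))
    (v θstar : EuclideanSpace ℝ (Fin p))
    (N : Seminorm ℝ (EuclideanSpace ℝ (Fin p)))
    (P : Submodule ℝ (EuclideanSpace ℝ (Fin p)))
    (ε s lam Rstar : ℝ) (hε : 0 < ε) (hs : 1 ≤ s) (hRstar : 0 ≤ Rstar)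
    (hΓ : ∀ δ, ε / 2 * ‖δ‖ ^ 2 ≤ ⟪δ, Γ δ⟫_ℝ)
    (hdual : ∀ δ, |⟪δ, v⟫_ℝ| ≤ N δ * Rstar)
    (hdecomp : ∀ a ∈ P, ∀ b ∈ Pᗮ, N (a + b) = N a + N b)
    (hcompat : ∀ u ∈ P, N u ≤ Real.sqrt s * ‖u‖)
    (hθstar : θstar ∈ P)
    (hlam : 2 * Rstar ≤ lam)
    (δhat : EuclideanSpace ℝ (Fin p))
    (hE : (1 / 2) * ⟪δhat, Γ δhat⟫_ℝ + ⟪δhat, v⟫_ℝ +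
        lam * (N (θstar + δhat) - N θstar) ≤ 0) :
    ‖δhat‖ ≤ 7 * lam / ε * Real.sqrt s :=
  stmt18_general Γ v θstar N P ε s lam Rstar hε hRstar hΓ hdual hdecomp hcompat hθstar hlam δhat hE
end
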